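/- In the Hecke algebra H of type A_n, suppose elements b_J (for a parabolic subset J) satisfy b_i b_J = b_J b_i = (v+v^{-1}) b_J for all i ∈ J. Then for J ⊆ K the product b_J b_K equals [J] b_K, where [J] = v^{-ℓ(w_J)} Σ_{w ∈ W_J} v^{2ℓ(w)} is the Hilbert polynomial of the parabolic subgroup W_J. -/

import Mathlib

open LaurentPolynomial

noncomputable section

/-- The `i`-th simple reflection (adjacent transposition) of `S_{n+1}`. -/
def sgen {n : ℕ} (i : Fin n) : Equiv.Perm (Fin (n + 1)) :=
  Equiv.swap i.castSucc i.succ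

/-- The Coxeter length of a permutation. -/
def len (n : ℕ) (w : Equiv.Perm (Fin (n + 1))) : ℕ :=
  sInf {d | ∃ l : List (Fin n), l.length = d ∧ (l.map sgen).prod = w}

/-- The parabolic subgroup `W_J ⊆ S_{n+1}`, as a finite set of permutations. -/
def parabolic (n : ℕ) (J : Finset (Fin n)) : Finset (Equiv.Perm (Fin (n + 1))) :=
  (Set.toFinite {w : Equiv.Perm (Fin (n + 1)) |
    w ∈ Subgroup.closure (sgen '' ↑J)}).toFinset

/-- The length `d_J` of the longest element `w_J` of `W_J`. -/
def dlen (n : ℕ) (J : Finset (Fin n)) : ℕ :=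
  (parabolic n J).sup (len n)

/-- The Hilbert polynomial `[J] = v^{-ℓ(w_J)} Σ_{w ∈ W_J} v^{2ℓ(w)}` of `W_J`. -/
def hilbertPoly (n : ℕ) (J : Finset (Fin n)) : LaurentPolynomial ℤ :=
  ∑ w ∈ parabolic n J, T (2 * (len n w : ℤ) - (dlen n J : ℤ))

/-!
Realise `W_J` as the permutations preserving the blocks into which the walls `k ∉ J` cut
`{0, …, n}`, and the length as the number of inversions. Peeling off one descent at a time,
`H_w b_K = v^{-ℓ(w)} b_K` for `w ∈ W_J ⊆ W_K`, because `(b_i - v) b_K = v⁻¹ b_K`. Hence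
`b_J b_K = Σ_{w ∈ W_J} v^{d_J - 2ℓ(w)} b_K`, and this sum is `[J]`: right multiplication by the
element `w_J` reversing every block is an involution of `W_J` with `ℓ(w w_J) = d_J - ℓ(w)`.
-/

open Equiv Finset

section Inversions

variable {n : ℕ}

def inversions (w : Perm (Fin (n + 1))) : Finset (Fin (n + 1) × Fin (n + 1)) :=
  {p | p.1 < p.2 ∧ w p.2 < w p.1}

lemma mem_inversions {w : Perm (Fin (n + 1))} {p : Fin (n + 1) × Fin (n + 1)} :
    p ∈ inversions w ↔ p.1 < p.2 ∧ w p.2 < w p.1 := by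
  simp [inversions]

lemma sgen_lt_sgen {i : Fin n} {x y : Fin (n + 1)} (hxy : x < y)
    (hne : (x, y) ≠ (i.castSucc, i.succ)) : sgen i x < sgen i y := by
  simp only [sgen, swap_apply_def, ne_eq, Prod.mk.injEq, Fin.ext_iff, Fin.lt_def,
    apply_ite Fin.val, Fin.val_castSucc, Fin.val_succ] at *
  split_ifs <;> omega

lemma mul_sgen_mul_sgen (w : Perm (Fin (n + 1))) (i : Fin n) : w * sgen i * sgen i = w :=
  mul_swap_mul_self _ _ w

lemma mul_sgen_mem_inversions_erase {w : Perm (Fin (n + 1))} {i : Fin n}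
    {p : Fin (n + 1) × Fin (n + 1)} (hp : p ∈ (inversions w).erase (i.castSucc, i.succ)) :
    (sgen i p.1, sgen i p.2) ∈ (inversions (w * sgen i)).erase (i.castSucc, i.succ) := by
  rw [mem_erase, mem_inversions] at hp ⊢
  obtain ⟨hpq, hlt, hinv⟩ := hp
  refine ⟨fun h => ?_, sgen_lt_sgen hlt hpq, by simpa [sgen] using hinv⟩
  simp only [Prod.ext_iff, sgen, swap_apply_eq_iff, swap_apply_left, swap_apply_right] at h
  rw [h.1, h.2] at hlt
  exact (Fin.castSucc_lt_succ (i := i)).not_gt hlt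

lemma card_inversions_mul_sgen {w : Perm (Fin (n + 1))} {i : Fin n}
    (h : w i.castSucc < w i.succ) : #(inversions (w * sgen i)) = #(inversions w) + 1 := by
  have hq : (i.castSucc, i.succ) ∈ inversions (w * sgen i) := by
    simpa [mem_inversions, sgen, Fin.castSucc_lt_succ] using h
  have hq' : (i.castSucc, i.succ) ∉ inversions w := by
    simpa [mem_inversions] using h.le
  have hφ : Function.Involutive fun p : Fin (n + 1) × Fin (n + 1) => (sgen i p.1, sgen i p.2) :=
    fun p => by simp [sgen]
  have herase : #((inversions (w * sgen i)).erase (i.castSucc, i.succ))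
      = #((inversions w).erase (i.castSucc, i.succ)) :=
    card_nbij' _ _
      (fun p hp => mem_coe.2 <| by
        simpa only [mul_sgen_mul_sgen] using mul_sgen_mem_inversions_erase hp)
      (fun p hp => mul_sgen_mem_inversions_erase hp) (fun p _ => hφ p) (fun p _ => hφ p)
  rw [← card_erase_add_one hq, herase, erase_eq_of_notMem hq']

end Inversions

lemma eq_one_of_strictMono {α : Type*} [LinearOrder α] [WellFoundedLT α] {w : Perm α}
    (hw : StrictMono w) : w = 1 :=
  Equiv.ext fun x => DFunLike.congr_fun
    (Subsingleton.elim (⟨w, hw.le_iff_le⟩ : α ≃o α) (OrderIso.refl α)) x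

section Blocks

variable {n : ℕ}

lemma exists_descent {w : Perm (Fin (n + 1))} (hw : w ≠ 1) :
    ∃ i : Fin n, w i.succ < w i.castSucc := by
  contrapose! hw
  exact eq_one_of_strictMono (Fin.strictMono_iff_lt_succ.2 fun i =>
    (hw i).lt_of_ne (w.injective.ne Fin.castSucc_lt_succ.ne))

/-- `W_J` is the stabiliser of the blocks into which the walls `k ∉ J` (each between `k` and
`k + 1`) cut `Fin (n + 1)`; `blockIndex J x` counts the walls below `x`. -/
def blockIndex (J : Finset (Fin n)) (x : Fin (n + 1)) : ℕ :=
  #{k : Fin n | (k : ℕ) < x ∧ k ∉ J}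

lemma blockIndex_mono (J : Finset (Fin n)) : Monotone (blockIndex J) :=
  fun _ _ hxy => card_le_card fun k => by
    simp only [mem_filter, mem_univ, true_and]
    exact fun hk => ⟨hk.1.trans_le hxy, hk.2⟩

lemma blockIndex_succ_of_mem {J : Finset (Fin n)} {i : Fin n} (hi : i ∈ J) :
    blockIndex J i.succ = blockIndex J i.castSucc := by
  unfold blockIndex
  congr 1
  ext k
  simp only [mem_filter, mem_univ, true_and, Fin.val_succ, Fin.val_castSucc]
  constructor
  · rintro ⟨hk, hkJ⟩
    refine ⟨lt_of_le_of_ne (Nat.lt_succ_iff.1 hk) fun h => hkJ ?_, hkJ⟩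
    rwa [Fin.ext h]
  · exact fun ⟨hk, hkJ⟩ => ⟨hk.trans (Nat.lt_succ_self _), hkJ⟩

lemma blockIndex_castSucc_lt_succ {J : Finset (Fin n)} {i : Fin n} (hi : i ∉ J) :
    blockIndex J i.castSucc < blockIndex J i.succ := by
  refine card_lt_card ⟨fun k => ?_, fun h => ?_⟩
  · simp only [mem_filter, mem_univ, true_and, Fin.val_succ, Fin.val_castSucc]
    exact fun hk => ⟨hk.1.trans (Nat.lt_succ_self _), hk.2⟩
  · simpa using h (by simp [hi] : i ∈ _)

def blockStabilizer (J : Finset (Fin n)) : Subgroup (Perm (Fin (n + 1))) where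
  carrier := {w | ∀ x, blockIndex J (w x) = blockIndex J x}
  one_mem' _ := rfl
  mul_mem' hu hv x := (hu _).trans (hv x)
  inv_mem' {u} hu x := by
    conv_rhs => rw [← u.apply_symm_apply x, hu]
    rfl

lemma sgen_mem_blockStabilizer {J : Finset (Fin n)} {i : Fin n} (hi : i ∈ J) :
    sgen i ∈ blockStabilizer J := fun x => by
  rcases eq_or_ne x i.castSucc with rfl | h1
  · simp [sgen, blockIndex_succ_of_mem hi]
  rcases eq_or_ne x i.succ with rfl | h2
  · simp [sgen, blockIndex_succ_of_mem hi]
  · simp [sgen, swap_apply_of_ne_of_ne h1 h2]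

lemma apply_lt_apply_of_blockIndex_lt {J : Finset (Fin n)} {w : Perm (Fin (n + 1))}
    (hw : w ∈ blockStabilizer J) {x y : Fin (n + 1)} (h : blockIndex J x < blockIndex J y) :
    w x < w y :=
  (blockIndex_mono J).reflect_lt (by rwa [hw x, hw y])

lemma mem_of_descent {J : Finset (Fin n)} {w : Perm (Fin (n + 1))}
    (hw : w ∈ blockStabilizer J) {i : Fin n} (hi : w i.succ < w i.castSucc) : i ∈ J := by
  by_contra hiJ
  exact hi.not_gt (apply_lt_apply_of_blockIndex_lt hw (blockIndex_castSucc_lt_succ hiJ))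

lemma blockStabilizer_univ : blockStabilizer (univ : Finset (Fin n)) = ⊤ :=
  eq_top_iff.2 fun w _ x => by simp [blockIndex]

end Blocks

section Length

variable {n : ℕ}

lemma inversions_one : inversions (1 : Perm (Fin (n + 1))) = ∅ := by
  ext p
  simpa [mem_inversions] using le_of_lt

theorem blockStabilizer_induction {J : Finset (Fin n)}
    {motive : (w : Perm (Fin (n + 1))) → w ∈ blockStabilizer J → Prop}
    (one : motive 1 (one_mem _))
    (mul_sgen : ∀ w hw i (hi : i ∈ J), w i.castSucc < w i.succ → motive w hw →
      motive (w * sgen i) (mul_mem hw (sgen_mem_blockStabilizer hi)))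
    {w : Perm (Fin (n + 1))} (hw : w ∈ blockStabilizer J) : motive w hw := by
  induction hk : #(inversions w) using Nat.strong_induction_on generalizing w with
  | _ k ih =>
  obtain rfl | hne := eq_or_ne w 1
  · exact one
  obtain ⟨i, hi⟩ := exists_descent hne
  have hiJ := mem_of_descent hw hi
  have hw' : w * sgen i ∈ blockStabilizer J := mul_mem hw (sgen_mem_blockStabilizer hiJ)
  have hasc : (w * sgen i) i.castSucc < (w * sgen i) i.succ := by simpa [sgen] using hi
  have hcard := card_inversions_mul_sgen hasc
  rw [mul_sgen_mul_sgen] at hcard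
  simpa only [mul_sgen_mul_sgen] using mul_sgen _ hw' i hiJ hasc (ih _ (by omega) hw' rfl)

lemma exists_word_of_mem_blockStabilizer {J : Finset (Fin n)} {w : Perm (Fin (n + 1))}
    (hw : w ∈ blockStabilizer J) :
    ∃ l : List (Fin n), (∀ i ∈ l, i ∈ J) ∧ l.length = #(inversions w) ∧
      (l.map sgen).prod = w := by
  induction hw using blockStabilizer_induction with
  | one => exact ⟨[], by simp, by simp [inversions_one], by simp⟩
  | mul_sgen w _ i hi hasc ih =>
    obtain ⟨l, hlJ, hlen, hprod⟩ := ih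
    refine ⟨l ++ [i], ?_, ?_, by simp [hprod]⟩
    · simpa [or_imp, forall_and] using ⟨hlJ, hi⟩
    · simp [hlen, card_inversions_mul_sgen hasc]

lemma card_inversions_mul_sgen_le (w : Perm (Fin (n + 1))) (i : Fin n) :
    #(inversions (w * sgen i)) ≤ #(inversions w) + 1 := by
  rcases lt_or_gt_of_ne (w.injective.ne (Fin.castSucc_lt_succ (i := i)).ne) with h | h
  · exact (card_inversions_mul_sgen h).le
  · have hasc : (w * sgen i) i.castSucc < (w * sgen i) i.succ := by simpa [sgen] using h
    have := card_inversions_mul_sgen hasc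
    rw [mul_sgen_mul_sgen] at this
    omega

lemma card_inversions_prod_le (l : List (Fin n)) :
    #(inversions (l.map sgen).prod) ≤ l.length := by
  induction l using List.reverseRecOn with
  | nil => simp [inversions_one]
  | append_singleton l i ih =>
    simpa using (card_inversions_mul_sgen_le _ i).trans (Nat.add_le_add_right ih 1)

theorem len_eq_card_inversions (w : Perm (Fin (n + 1))) : len n w = #(inversions w) := by
  obtain ⟨l, -, hlen, hprod⟩ :=
    exists_word_of_mem_blockStabilizer (blockStabilizer_univ ▸ Subgroup.mem_top w)
  unfold len
  refine le_antisymm (Nat.sInf_le ⟨l, hlen, hprod⟩) (le_csInf ⟨_, l, hlen, hprod⟩ ?_)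
  rintro _ ⟨l', rfl, rfl⟩
  exact card_inversions_prod_le l'

lemma len_mul_sgen {w : Perm (Fin (n + 1))} {i : Fin n} (h : w i.castSucc < w i.succ) :
    len n (w * sgen i) = len n w + 1 := by
  simp only [len_eq_card_inversions, card_inversions_mul_sgen h]

theorem mem_parabolic_iff {J : Finset (Fin n)} {w : Perm (Fin (n + 1))} :
    w ∈ parabolic n J ↔ w ∈ blockStabilizer J := by
  rw [parabolic, Set.Finite.mem_toFinset, Set.mem_ofPred_eq]
  refine ⟨fun h => (Subgroup.closure_le _).2 ?_ h, fun h => ?_⟩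
  · rintro _ ⟨i, hi, rfl⟩
    exact sgen_mem_blockStabilizer hi
  · obtain ⟨l, hlJ, -, rfl⟩ := exists_word_of_mem_blockStabilizer h
    refine list_prod_mem fun x hx => ?_
    obtain ⟨i, hi, rfl⟩ := List.mem_map.1 hx
    exact Subgroup.subset_closure ⟨i, hlJ i hi, rfl⟩

end Length

section LongestElement

variable {n : ℕ}

def blockPairs (J : Finset (Fin n)) : Finset (Fin (n + 1) × Fin (n + 1)) :=
  {p | p.1 < p.2 ∧ blockIndex J p.1 = blockIndex J p.2}

lemma mem_blockPairs {J : Finset (Fin n)} {p : Fin (n + 1) × Fin (n + 1)} :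
    p ∈ blockPairs J ↔ p.1 < p.2 ∧ blockIndex J p.1 = blockIndex J p.2 := by
  simp [blockPairs]

lemma inversions_subset_blockPairs {J : Finset (Fin n)} {w : Perm (Fin (n + 1))}
    (hw : w ∈ blockStabilizer J) : inversions w ⊆ blockPairs J := fun p hp => by
  rw [mem_inversions] at hp
  refine mem_blockPairs.2 ⟨hp.1, (blockIndex_mono J hp.1.le).eq_of_not_lt fun h => ?_⟩
  exact hp.2.not_gt (apply_lt_apply_of_blockIndex_lt hw h)

def block (J : Finset (Fin n)) (x : Fin (n + 1)) : Finset (Fin (n + 1)) :=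
  {y | blockIndex J y = blockIndex J x}

lemma block_nonempty (J : Finset (Fin n)) (x : Fin (n + 1)) : (block J x).Nonempty :=
  ⟨x, by simp [block]⟩

def blockMin (J : Finset (Fin n)) (x : Fin (n + 1)) : Fin (n + 1) :=
  (block J x).min' (block_nonempty J x)

def blockMax (J : Finset (Fin n)) (x : Fin (n + 1)) : Fin (n + 1) :=
  (block J x).max' (block_nonempty J x)

lemma blockMin_le (J : Finset (Fin n)) (x : Fin (n + 1)) : blockMin J x ≤ x :=
  min'_le _ _ (by simp [block])

lemma le_blockMax (J : Finset (Fin n)) (x : Fin (n + 1)) : x ≤ blockMax J x :=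
  le_max' _ _ (by simp [block])

lemma blockMin_congr {J : Finset (Fin n)} {x y : Fin (n + 1)}
    (h : blockIndex J x = blockIndex J y) : blockMin J x = blockMin J y := by
  simp only [blockMin, block, h]

lemma blockMax_congr {J : Finset (Fin n)} {x y : Fin (n + 1)}
    (h : blockIndex J x = blockIndex J y) : blockMax J x = blockMax J y := by
  simp only [blockMax, block, h]

lemma blockIndex_of_mem_Icc {J : Finset (Fin n)} {x y : Fin (n + 1)}
    (h₁ : blockMin J x ≤ y) (h₂ : y ≤ blockMax J x) : blockIndex J y = blockIndex J x := by
  have hmin : blockIndex J (blockMin J x) = blockIndex J x :=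
    (mem_filter.1 (min'_mem (block J x) _)).2
  have hmax : blockIndex J (blockMax J x) = blockIndex J x :=
    (mem_filter.1 (max'_mem (block J x) _)).2
  have := blockIndex_mono J h₁
  have := blockIndex_mono J h₂
  omega

def blockReverse (J : Finset (Fin n)) (x : Fin (n + 1)) : Fin (n + 1) :=
  ⟨blockMin J x + blockMax J x - x, by
    have := blockMin_le J x
    have := (blockMax J x).isLt
    omega⟩

lemma blockIndex_blockReverse (J : Finset (Fin n)) (x : Fin (n + 1)) :
    blockIndex J (blockReverse J x) = blockIndex J x := by
  have := blockMin_le J x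
  have := le_blockMax J x
  refine blockIndex_of_mem_Icc ?_ ?_ <;> simp only [Fin.le_def, blockReverse] at * <;> omega

lemma blockReverse_involutive (J : Finset (Fin n)) : Function.Involutive (blockReverse J) := by
  intro x
  have hmin := blockMin_congr (blockIndex_blockReverse J x)
  have hmax := blockMax_congr (blockIndex_blockReverse J x)
  have := blockMin_le J x
  have := le_blockMax J x
  ext
  simp only [blockReverse, hmin, hmax, Fin.le_def] at *
  omega

lemma blockReverse_lt_blockReverse {J : Finset (Fin n)} {x y : Fin (n + 1)} (hxy : x < y)
    (h : blockIndex J x = blockIndex J y) : blockReverse J y < blockReverse J x := by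
  have := blockMin_le J x
  have := le_blockMax J y
  simp only [blockReverse, blockMin_congr h, blockMax_congr h, Fin.lt_def, Fin.le_def] at *
  omega

def longestElement (J : Finset (Fin n)) : Perm (Fin (n + 1)) :=
  (blockReverse_involutive J).toPerm

lemma longestElement_mem_blockStabilizer (J : Finset (Fin n)) :
    longestElement J ∈ blockStabilizer J :=
  blockIndex_blockReverse J

lemma longestElement_mul_self (J : Finset (Fin n)) :
    longestElement J * longestElement J = 1 :=
  Equiv.ext (blockReverse_involutive J)

lemma card_inversions_mul_longestElement {J : Finset (Fin n)} {w : Perm (Fin (n + 1))}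
    (hw : w ∈ blockStabilizer J) :
    #(inversions (w * longestElement J)) + #(inversions w) = #(blockPairs J) := by
  have hrev : ∀ {x y}, x < y → blockIndex J x = blockIndex J y →
      longestElement J y < longestElement J x := blockReverse_lt_blockReverse
  have hw₀ := blockReverse_involutive J
  have hidx := blockIndex_blockReverse J
  let φ (p : Fin (n + 1) × Fin (n + 1)) := (longestElement J p.2, longestElement J p.1)
  have hφ : Function.Involutive φ := fun p => by simp [φ, longestElement, hw₀ _]
  rw [← card_sdiff_add_card_eq_card (inversions_subset_blockPairs hw)]
  congr 1
  refine card_nbij' φ φ (fun p hp => ?_) (fun p hp => ?_) (fun p _ => hφ p) (fun p _ => hφ p)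
  · have hpJ := mem_blockPairs.1 <| inversions_subset_blockPairs
      (mul_mem hw (longestElement_mem_blockStabilizer J)) hp
    rw [mem_coe, mem_inversions] at hp
    simp only [φ, mem_coe, mem_sdiff, mem_blockPairs, mem_inversions, not_and, not_lt]
    refine ⟨⟨hrev hpJ.1 hpJ.2, ?_⟩, fun _ => hp.2.le⟩
    simp [longestElement, hidx, hpJ.2]
  · simp only [mem_coe, mem_sdiff, mem_blockPairs, mem_inversions, not_and, not_lt] at hp
    obtain ⟨⟨hlt, hpJ⟩, hnot⟩ := hp
    refine mem_inversions.2 ⟨hrev hlt hpJ, ?_⟩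
    simpa [φ, longestElement, hw₀ _] using (hnot hlt).lt_of_ne (w.injective.ne hlt.ne)

end LongestElement

section HilbertPoly

variable {n : ℕ}

lemma dlen_eq_card_blockPairs (J : Finset (Fin n)) : dlen n J = #(blockPairs J) := by
  have hw₀ := longestElement_mem_blockStabilizer J
  have h := card_inversions_mul_longestElement (one_mem (blockStabilizer J))
  rw [one_mul, inversions_one, card_empty, add_zero] at h
  refine le_antisymm (Finset.sup_le fun w hw => ?_) ?_
  · rw [len_eq_card_inversions]
    exact card_le_card (inversions_subset_blockPairs (mem_parabolic_iff.1 hw))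
  · rw [← h, ← len_eq_card_inversions]
    exact le_sup (f := len n) (mem_parabolic_iff.2 hw₀)

lemma len_mul_longestElement {J : Finset (Fin n)} {w : Perm (Fin (n + 1))}
    (hw : w ∈ parabolic n J) : len n (w * longestElement J) + len n w = dlen n J := by
  simpa only [len_eq_card_inversions, dlen_eq_card_blockPairs]
    using card_inversions_mul_longestElement (mem_parabolic_iff.1 hw)

theorem hilbertPoly_eq_sum_T_dlen_sub (J : Finset (Fin n)) :
    hilbertPoly n J = ∑ w ∈ parabolic n J, T ((dlen n J : ℤ) - 2 * len n w) := by
  have hmem {w} (hw : w ∈ parabolic n J) : w * longestElement J ∈ parabolic n J :=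
    mem_parabolic_iff.2 <| mul_mem (mem_parabolic_iff.1 hw) (longestElement_mem_blockStabilizer J)
  have hinv (w) : w * longestElement J * longestElement J = w := by
    rw [mul_assoc, longestElement_mul_self, mul_one]
  refine sum_nbij' (· * longestElement J) (· * longestElement J) (fun _ => hmem) (fun _ => hmem)
    (fun w _ => hinv w) (fun w _ => hinv w) fun w hw => ?_
  have := len_mul_longestElement hw
  congr 1
  omega

end HilbertPoly

section Hecke

variable {n : ℕ} {A : Type*} [Ring A] [Algebra (LaurentPolynomial ℤ) A]

theorem std_mul_eq_of_mem_parabolic {b : Fin n → A} {J : Finset (Fin n)} {c : A}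
    {Hstd : Perm (Fin (n + 1)) → A} (hH1 : Hstd 1 = 1)
    (hHmul : ∀ (w : Perm (Fin (n + 1))) (i : Fin n), len n (w * sgen i) = len n w + 1 →
      Hstd (w * sgen i) = Hstd w * (b i - algebraMap (LaurentPolynomial ℤ) A (T 1)))
    (hc : ∀ i ∈ J, b i * c = algebraMap (LaurentPolynomial ℤ) A (T 1 + T (-1)) * c)
    {w : Perm (Fin (n + 1))} (hw : w ∈ parabolic n J) :
    Hstd w * c = algebraMap (LaurentPolynomial ℤ) A (T (-len n w)) * c := by
  rw [mem_parabolic_iff] at hw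
  induction hw using blockStabilizer_induction with
  | one => simp [hH1, len_eq_card_inversions, inversions_one]
  | mul_sgen w _ i hi hasc ih =>
    have hgen : (b i - algebraMap (LaurentPolynomial ℤ) A (T 1)) * c
        = algebraMap (LaurentPolynomial ℤ) A (T (-1)) * c := by
      rw [sub_mul, hc i hi, map_add, add_mul, add_sub_cancel_left]
    rw [hHmul w i (len_mul_sgen hasc), mul_assoc, hgen, ← mul_assoc, ← Algebra.commutes,
      mul_assoc, ih, ← mul_assoc, ← map_mul, ← T_add, len_mul_sgen hasc]
    congr 3
    push_cast
    ring

end Hecke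

theorem stmt11_general (n : ℕ) (A : Type*) [Ring A] [Algebra (LaurentPolynomial ℤ) A]
    (b : Fin n → A)
    (J K : Finset (Fin n)) (hJK : J ⊆ K)
    (bJ bK : A)
    (Hstd : Equiv.Perm (Fin (n + 1)) → A)
    (hH1 : Hstd 1 = 1)
    (hHmul : ∀ (w : Equiv.Perm (Fin (n + 1))) (i : Fin n),
      len n (w * sgen i) = len n w + 1 →
      Hstd (w * sgen i) = Hstd w * (b i - algebraMap (LaurentPolynomial ℤ) A (T 1)))
    (hbJ : bJ = ∑ w ∈ parabolic n J,
      algebraMap (LaurentPolynomial ℤ) A (T ((dlen n J : ℤ) - (len n w : ℤ))) * Hstd w)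
    (hbK : ∀ i ∈ K,
      b i * bK = algebraMap (LaurentPolynomial ℤ) A (T 1 + T (-1)) * bK ∧
      bK * b i = algebraMap (LaurentPolynomial ℤ) A (T 1 + T (-1)) * bK) :
    bJ * bK = algebraMap (LaurentPolynomial ℤ) A (hilbertPoly n J) * bK := by
  rw [hbJ, sum_mul, hilbertPoly_eq_sum_T_dlen_sub, map_sum, sum_mul]
  refine sum_congr rfl fun w hw => ?_
  rw [mul_assoc, std_mul_eq_of_mem_parabolic hH1 hHmul (fun i hi => (hbK i (hJK hi)).1) hw,
    ← mul_assoc, ← map_mul, ← T_add]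
  congr 3
  ring

/-- In the Hecke algebra of type `A_n`: if `b_J` is the Kazhdan–Lusztig basis element
of the longest element of `W_J` (expanded in the standard basis `H_w`, `w ∈ W_J`, as
`b_J = Σ_w v^{d_J - ℓ(w)} H_w`), and `b_K` absorbs each generator `b_i`, `i ∈ K`, as
`b_i b_K = b_K b_i = (v + v⁻¹) b_K`, then for `J ⊆ K` one has `b_J b_K = [J]·b_K`,
where `[J]` is the Hilbert polynomial of `W_J`. -/
theorem stmt11 (n : ℕ) (A : Type*) [Ring A] [Algebra (LaurentPolynomial ℤ) A]
    (b : Fin n → A)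
    (hquad : ∀ i : Fin n,
      b i * b i = algebraMap (LaurentPolynomial ℤ) A (T 1 + T (-1)) * b i)
    (hcomm : ∀ i j : Fin n, 2 ≤ |(i : ℤ) - (j : ℤ)| → b i * b j = b j * b i)
    (hbraid : ∀ i j : Fin n, |(i : ℤ) - (j : ℤ)| = 1 →
      b i * b j * b i + b j = b j * b i * b j + b i)
    (J K : Finset (Fin n)) (hJK : J ⊆ K)
    (bJ bK : A)
    (Hstd : Equiv.Perm (Fin (n + 1)) → A)
    (hH1 : Hstd 1 = 1)
    (hHmul : ∀ (w : Equiv.Perm (Fin (n + 1))) (i : Fin n),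
      len n (w * sgen i) = len n w + 1 →
      Hstd (w * sgen i) = Hstd w * (b i - algebraMap (LaurentPolynomial ℤ) A (T 1)))
    (hbJ : bJ = ∑ w ∈ parabolic n J,
      algebraMap (LaurentPolynomial ℤ) A (T ((dlen n J : ℤ) - (len n w : ℤ))) * Hstd w)
    (hbK : ∀ i ∈ K,
      b i * bK = algebraMap (LaurentPolynomial ℤ) A (T 1 + T (-1)) * bK ∧
      bK * b i = algebraMap (LaurentPolynomial ℤ) A (T 1 + T (-1)) * bK) :
    bJ * bK = algebraMap (LaurentPolynomial ℤ) A (hilbertPoly n J) * bK :=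
  stmt11_general n A b J K hJK bJ bK Hstd hH1 hHmul hbJ hbK
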